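/- Let S : Z → Z be measurable, X ⊆ Z measurable with S(X) ⊆ X, T = S|_X, and μ an S-invariant finite measure. Let 𝒵 = {Z₀, …, Z_k} be a finite measurable partition of Z with Z₁, …, Z_k ⊆ X, and 𝒞 = X ∩ 𝒵. Then for every n, H_μ(𝒵_S^n) ≤ H_μ(𝒞_T^n) + μ(Xᶜ) log(1/μ(Xᶜ)), and consequently the partition entropies satisfy h_μ(S, 𝒵) ≤ h_μ(T, 𝒞). -/

import Mathlib

open MeasureTheory

/-- The summand `μ(C) log(1/μ(C))` of the partition entropy. -/
noncomputable def entTerm (x : ENNReal) : ℝ := x.toReal * Real.log (1 / x.toReal)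

lemma entTerm_zero : entTerm 0 = 0 := by simp [entTerm]

lemma entTerm_nonneg {x : ENNReal} (hx : x ≤ 1) : 0 ≤ entTerm x := by
  rcases eq_or_ne x 0 with h | h
  · simp [h, entTerm]
  · have ht : x.toReal ≤ 1 := by
      simpa using ENNReal.toReal_mono (by simp) hx
    have h0 : 0 < x.toReal := ENNReal.toReal_pos h (hx.trans_lt (by simp)).ne
    exact mul_nonneg h0.le (Real.log_nonneg (by rw [le_div_iff₀ h0]; simpa using ht))

lemma entTerm_subadd {a b : ENNReal} (ha : a ≠ ⊤) (hb : b ≠ ⊤) :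
    entTerm (a + b) ≤ entTerm a + entTerm b := by
  unfold entTerm
  rw [ENNReal.toReal_add ha hb]
  set s := a.toReal with hs
  set t := b.toReal with htt
  have hs0 : 0 ≤ s := ENNReal.toReal_nonneg
  have ht0 : 0 ≤ t := ENNReal.toReal_nonneg
  rcases eq_or_lt_of_le hs0 with h | h
  · simp [← h]
  rcases eq_or_lt_of_le ht0 with h' | h'
  · simp [← h']
  have key : ∀ x y : ℝ, 0 < x → 0 < y →
      x * Real.log (1 / (x + y)) ≤ x * Real.log (1 / x) := by
    intro x y hx hy
    refine mul_le_mul_of_nonneg_left (Real.log_le_log (by positivity) ?_) hx.le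
    exact one_div_le_one_div_of_le hx (by linarith)
  calc (s + t) * Real.log (1 / (s + t))
      = s * Real.log (1 / (s + t)) + t * Real.log (1 / (s + t)) := by ring
    _ ≤ s * Real.log (1 / s) + t * Real.log (1 / t) := by
        refine add_le_add (key s t h h') ?_
        have := key t s h' h
        rw [add_comm t s] at this; exact this

lemma ent_sum_le {ι : Type*} [Fintype ι] [Nonempty ι] (p : ι → ℝ)
    (hp : ∀ i, 0 ≤ p i) (hsum : ∑ i, p i ≤ 1) :
    ∑ i, p i * Real.log (1 / p i) ≤ 1 + Real.log (Fintype.card ι) := by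
  set m : ℝ := (Fintype.card ι : ℝ) with hm
  have hm1 : 1 ≤ m := by
    have := Fintype.card_pos (α := ι)
    rw [hm]; exact_mod_cast Nat.one_le_iff_ne_zero.mpr this.ne'
  have hm0 : 0 < m := lt_of_lt_of_le one_pos hm1
  have hterm : ∀ i, p i * Real.log (1 / p i) ≤ 1 / m + p i * Real.log m - p i := by
    intro i
    rcases eq_or_lt_of_le (hp i) with h | h
    · rw [← h]; simp; positivity
    · have h1 : Real.log (1 / p i) = Real.log m + Real.log (1 / (m * p i)) := by
        rw [← Real.log_mul hm0.ne' (by positivity)]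
        congr 1; field_simp
      have h2 : Real.log (1 / (m * p i)) ≤ 1 / (m * p i) - 1 :=
        Real.log_le_sub_one_of_pos (by positivity)
      have h3 : p i * (1 / (m * p i)) = 1 / m := by field_simp
      calc p i * Real.log (1 / p i)
          = p i * Real.log m + p i * Real.log (1 / (m * p i)) := by rw [h1]; ring
        _ ≤ p i * Real.log m + (p i * (1 / (m * p i)) - p i) := by
            nlinarith [mul_le_mul_of_nonneg_left h2 h.le]
        _ = 1 / m + p i * Real.log m - p i := by rw [h3]; ring
  calc ∑ i, p i * Real.log (1 / p i)
      ≤ ∑ i, (1 / m + p i * Real.log m - p i) := Finset.sum_le_sum fun i _ => hterm i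
    _ = (Fintype.card ι : ℝ) * (1 / m) + (∑ i, p i) * Real.log m - ∑ i, p i := by
        rw [Finset.sum_sub_distrib, Finset.sum_add_distrib, Finset.sum_const,
          ← Finset.sum_mul]
        simp [hm, mul_comm]
    _ ≤ 1 + Real.log m := by
        have hlm : 0 ≤ Real.log m := Real.log_nonneg hm1
        have hsp : 0 ≤ ∑ i, p i := Finset.sum_nonneg fun i _ => hp i
        have : m * (1 / m) = 1 := by field_simp
        nlinarith


/-- `H_μ(𝒵_S^n)`: the entropy of the iterated partition
`𝒵_S^n = 𝒵 ∨ S⁻¹𝒵 ∨ ⋯ ∨ S^{-(n-1)}𝒵`, cells indexed by `f : Fin n → Fin (k+1)`. -/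
noncomputable def iterEntFull {Z : Type*} [MeasurableSpace Z] (S : Z → Z)
    (μ : Measure Z) {k : ℕ} (𝒵 : Fin (k + 1) → Set Z) (n : ℕ) : ℝ :=
  ∑ f : Fin n → Fin (k + 1), entTerm (μ (⋂ j : Fin n, S^[(j : ℕ)] ⁻¹' 𝒵 (f j)))

/-- `H_μ(𝒞_T^n)` for `𝒞 = X ∩ 𝒵` and `T = S|_X`: since `T⁻ʲ(X ∩ A) = X ∩ S⁻ʲ(A)`,
its cells are `X ∩ ⋂_j S⁻ʲ(𝒵 (f j))`. -/
noncomputable def iterEntSub {Z : Type*} [MeasurableSpace Z] (S : Z → Z)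
    (X : Set Z) (μ : Measure Z) {k : ℕ} (𝒵 : Fin (k + 1) → Set Z) (n : ℕ) : ℝ :=
  ∑ f : Fin n → Fin (k + 1),
    entTerm (μ (X ∩ ⋂ j : Fin n, S^[(j : ℕ)] ⁻¹' 𝒵 (f j)))

/-- If `𝒵 = {Z₀, …, Z_k}` is a measurable partition of `Z` with `Z₁, …, Z_k ⊆ X`
and `μ` is `S`-invariant, then
`H_μ(𝒵_S^n) ≤ H_μ(𝒞_T^n) + μ(Xᶜ) log(1/μ(Xᶜ))`, and consequently
`h_μ(S, 𝒵) ≤ h_μ(T, 𝒞)`. -/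
theorem iterEntFull_le_iterEntSub {Z : Type*} [MeasurableSpace Z] (S : Z → Z)
    (hS : Measurable S) (X : Set Z) (hX : MeasurableSet X) (hSX : S '' X ⊆ X)
    (μ : Measure Z) [IsFiniteMeasure μ] (hμ1 : μ Set.univ ≤ 1)
    (hinv : ∀ B : Set Z, MeasurableSet B → μ (S ⁻¹' B) = μ B)
    {k : ℕ} (𝒵 : Fin (k + 1) → Set Z) (hmeas : ∀ i, MeasurableSet (𝒵 i))
    (hdisj : Pairwise (Function.onFun Disjoint 𝒵))
    (hcov : ⋃ i, 𝒵 i = Set.univ) (hsub : ∀ i : Fin (k + 1), i ≠ 0 → 𝒵 i ⊆ X) :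
    (∀ n : ℕ, iterEntFull S μ 𝒵 n ≤ iterEntSub S X μ 𝒵 n + entTerm (μ Xᶜ)) ∧
    Filter.limsup (fun n : ℕ => iterEntFull S μ 𝒵 n / n) Filter.atTop ≤
      Filter.limsup (fun n : ℕ => iterEntSub S X μ 𝒵 n / n) Filter.atTop := by
  -- notation for the cells
  set A : ∀ n : ℕ, (Fin n → Fin (k + 1)) → Set Z :=
    fun n f => ⋂ j : Fin n, S^[(j : ℕ)] ⁻¹' 𝒵 (f j) with hA
  have hle1 : ∀ B : Set Z, μ B ≤ 1 := fun B => (measure_mono (Set.subset_univ B)).trans hμ1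
  have hAmeas : ∀ n f, MeasurableSet (A n f) := fun n f =>
    MeasurableSet.iInter fun j => (hS.iterate (j : ℕ)) (hmeas (f j))
  -- X ⊆ S^[j]⁻¹ X
  have hXiter : ∀ j : ℕ, X ⊆ S^[j] ⁻¹' X := by
    intro j
    induction j with
    | zero => simp
    | succ j ih =>
      intro x hx
      have : S x ∈ X := hSX ⟨x, hx, rfl⟩
      simpa [Function.iterate_succ_apply] using ih this
  -- μ (S^[j]⁻¹ X) = μ X
  have hXm : ∀ j : ℕ, MeasurableSet (S^[j] ⁻¹' X) := fun j => (hS.iterate j) hX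
  have hμiter : ∀ j : ℕ, μ (S^[j] ⁻¹' X) = μ X := by
    intro j
    induction j with
    | zero => simp
    | succ j ih =>
      have : S^[j + 1] ⁻¹' X = S ⁻¹' (S^[j] ⁻¹' X) := by
        rw [Function.iterate_succ, Set.preimage_comp]
      rw [this, hinv _ (hXm j), ih]
  have hnull : ∀ j : ℕ, μ (S^[j] ⁻¹' X \ X) = 0 := by
    intro j
    rw [measure_diff (hXiter j) hX.nullMeasurableSet (measure_ne_top μ X), hμiter j,
      tsub_self]
  -- Step B : the complement sum
  have hB : ∀ n : ℕ, ∑ f : Fin n → Fin (k + 1), entTerm (μ (Xᶜ ∩ A n f))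
      = entTerm (μ Xᶜ) := by
    intro n
    have h0 : μ (Xᶜ ∩ A n (fun _ => 0)) = μ Xᶜ := by
      refine le_antisymm (measure_mono Set.inter_subset_left) ?_
      have hdn : μ (Xᶜ \ A n (fun _ => 0)) = 0 := by
        refine measure_mono_null ?_ (measure_iUnion_null hnull)
        intro x hx
        obtain ⟨hxc, hxa⟩ := hx
        rw [hA, Set.mem_iInter] at hxa
        push_neg at hxa
        obtain ⟨j, hj⟩ := hxa
        have hxz : S^[(j : ℕ)] x ∈ ⋃ i, 𝒵 i := by rw [hcov]; trivial
        obtain ⟨i, hi⟩ := Set.mem_iUnion.mp hxz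
        have hine : i ≠ 0 := by rintro rfl; exact hj hi
        exact Set.mem_iUnion.mpr ⟨(j : ℕ), ⟨hsub i hine hi, hxc⟩⟩
      calc μ Xᶜ ≤ μ (Xᶜ ∩ A n (fun _ => 0)) + μ (Xᶜ \ A n (fun _ => 0)) :=
            measure_le_inter_add_diff μ _ _
        _ = μ (Xᶜ ∩ A n (fun _ => 0)) := by rw [hdn, add_zero]
    rw [Finset.sum_eq_single_of_mem (fun _ => 0) (Finset.mem_univ _), h0]
    intro g _ hg
    obtain ⟨j, hj⟩ := Function.ne_iff.mp hg
    have : μ (Xᶜ ∩ A n g) = 0 := by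
      refine measure_mono_null ?_ (hnull (j : ℕ))
      intro x hx
      obtain ⟨hxc, hxa⟩ := hx
      rw [hA, Set.mem_iInter] at hxa
      exact ⟨hsub (g j) hj (hxa j), hxc⟩
    rw [this, entTerm_zero]
  -- Part 1
  have claim1 : ∀ n : ℕ, iterEntFull S μ 𝒵 n ≤ iterEntSub S X μ 𝒵 n + entTerm (μ Xᶜ) := by
    intro n
    have : iterEntFull S μ 𝒵 n ≤ ∑ f : Fin n → Fin (k + 1),
        (entTerm (μ (X ∩ A n f)) + entTerm (μ (Xᶜ ∩ A n f))) := by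
      refine Finset.sum_le_sum fun f _ => ?_
      have hsplit : μ (A n f) = μ (X ∩ A n f) + μ (Xᶜ ∩ A n f) := by
        rw [Set.inter_comm X, Set.inter_comm Xᶜ, ← Set.diff_eq]
        exact (measure_inter_add_diff _ hX).symm
      rw [hsplit]
      exact entTerm_subadd (measure_ne_top μ _) (measure_ne_top μ _)
    rw [Finset.sum_add_distrib, hB n] at this
    exact this
  refine ⟨claim1, ?_⟩
  have hc0 : 0 ≤ entTerm (μ Xᶜ) := entTerm_nonneg (hle1 _)
  have hu0 : ∀ n : ℕ, 0 ≤ iterEntFull S μ 𝒵 n / n := by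
    intro n
    exact div_nonneg (Finset.sum_nonneg fun f _ => entTerm_nonneg (hle1 _))
      (Nat.cast_nonneg n)
  set L : ℝ := Real.log (k + 1) with hL
  have hL0 : 0 ≤ L := Real.log_nonneg (by exact_mod_cast Nat.le_add_left 1 k)
  have hvC : ∀ n : ℕ, iterEntSub S X μ 𝒵 n / n ≤ L + 1 := by
    intro n
    have hd : ((Finset.univ : Finset (Fin n → Fin (k + 1))) : Set (Fin n → Fin (k + 1))).PairwiseDisjoint
        (fun f => X ∩ A n f) := by
      intro f _ g _ hfg
      obtain ⟨j, hj⟩ := Function.ne_iff.mp hfg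
      refine Set.disjoint_left.mpr fun x hxf hxg => ?_
      have h1 : S^[(j : ℕ)] x ∈ 𝒵 (f j) := by
        have := hxf.2; rw [hA, Set.mem_iInter] at this; exact this j
      have h2 : S^[(j : ℕ)] x ∈ 𝒵 (g j) := by
        have := hxg.2; rw [hA, Set.mem_iInter] at this; exact this j
      exact Set.disjoint_left.mp (hdisj hj) h1 h2
    have hsum1 : ∑ f : Fin n → Fin (k + 1), μ (X ∩ A n f) ≤ 1 := by
      rw [← measure_biUnion_finset hd fun f _ => hX.inter (hAmeas n f)]
      exact hle1 _
    have hsumr : ∑ f : Fin n → Fin (k + 1), (μ (X ∩ A n f)).toReal ≤ 1 := by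
      rw [← ENNReal.toReal_sum fun f _ => measure_ne_top μ _]
      simpa using ENNReal.toReal_mono (by simp) hsum1
    have hent := ent_sum_le (fun f : Fin n → Fin (k + 1) => (μ (X ∩ A n f)).toReal)
      (fun f => ENNReal.toReal_nonneg) hsumr
    have hcard : Real.log (Fintype.card (Fin n → Fin (k + 1)) : ℝ) = n * L := by
      rw [Fintype.card_fun, Fintype.card_fin, Fintype.card_fin]
      push_cast
      rw [Real.log_pow]
    have hsubb : iterEntSub S X μ 𝒵 n ≤ 1 + n * L := by
      rw [hcard] at hent
      exact hent
    rcases Nat.eq_zero_or_pos n with rfl | hn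
    · rw [Nat.cast_zero, div_zero]; linarith
    · have hnpos : (0 : ℝ) < n := Nat.cast_pos.mpr hn
      rw [div_le_iff₀ hnpos]
      have hn1 : (1 : ℝ) ≤ n := by exact_mod_cast hn
      nlinarith
  conv_rhs => rw [Filter.limsup_eq]
  refine le_csInf ⟨L + 1, Filter.Eventually.of_forall hvC⟩ ?_
  intro a ha
  simp only [Set.mem_setOf_eq] at ha
  refine le_of_forall_pos_le_add fun ε hε => ?_
  have hcob : Filter.IsCoboundedUnder (· ≤ ·) Filter.atTop
      (fun n : ℕ => iterEntFull S μ 𝒵 n / n) :=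
    Filter.isCoboundedUnder_le_of_le _ hu0
  refine Filter.limsup_le_of_le hcob ?_
  have htend : Filter.Tendsto (fun n : ℕ => entTerm (μ Xᶜ) / n)
      Filter.atTop (nhds 0) := tendsto_const_div_atTop_nhds_zero_nat _
  filter_upwards [ha, htend.eventually (gt_mem_nhds hε),
    Filter.eventually_gt_atTop 0] with n hva hcn hn
  have hnpos : (0 : ℝ) < n := Nat.cast_pos.mpr hn
  calc iterEntFull S μ 𝒵 n / (n : ℝ) ≤ (iterEntSub S X μ 𝒵 n + entTerm (μ Xᶜ)) / (n : ℝ) := by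
        gcongr
        exact claim1 n
    _ = iterEntSub S X μ 𝒵 n / (n : ℝ) + entTerm (μ Xᶜ) / (n : ℝ) := add_div _ _ _
    _ ≤ a + ε := add_le_add hva (le_of_lt hcn)
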